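/- Let L ≥ 2 and let U_1, …, U_L ∈ ℝ^{n×n} satisfy the relaxed balanced conditions U_{i+1}^⊤ U_{i+1} − U_i U_i^⊤ = λ_i I_n for i = 1, …, L−1, for some real numbers λ_1, …, λ_{L−1}. Define a_0 := 0 and a_k := Σ_{i=1}^k λ_{L−i} for k = 1, …, L−1, and define b_0 := 0 and b_k := −Σ_{i=1}^k λ_i for k = 1, …, L−2. Then for every j ∈ {1, …, L}: (U_L ⋯ U_{j+1})(U_L ⋯ U_{j+1})^⊤ = ∏_{k=0}^{L−j−1} (U_L U_L^⊤ − a_k I_n) (with the empty product for j = L equal to I_n), and (U_1^⊤ ⋯ U_{j−1}^⊤)(U_{j−1} ⋯ U_1) = ∏_{k=0}^{j−2} (U_1^⊤ U_1 − b_k I_n) (with the empty product for j = 1 equal to I_n). In particular, taking j = 0 in the first family, Z_L Z_L^⊤ = ∏_{k=0}^{L−1} (U_L U_L^⊤ − a_k I_n) where Z_L := U_L ⋯ U_1. -/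
import Mathlib


open Matrix

/-- `prodFrom U j k = U (j+k) * U (j+k-1) * ⋯ * U (j+1)` (equal to `1` for `k = 0`). -/
noncomputable def prodFrom {n : ℕ} (U : ℕ → Matrix (Fin n) (Fin n) ℝ) (j : ℕ) :
    ℕ → Matrix (Fin n) (Fin n) ℝ
  | 0 => 1
  | k + 1 => U (j + k + 1) * prodFrom U j k

/-- `polyProd A c N = ∏_{k=0}^{N-1} (A - c k • 1)` (the factors commute). -/
noncomputable def polyProd {n : ℕ} (A : Matrix (Fin n) (Fin n) ℝ) (c : ℕ → ℝ) :
    ℕ → Matrix (Fin n) (Fin n) ℝ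
  | 0 => 1
  | N + 1 => polyProd A c N * (A - c N • (1 : Matrix (Fin n) (Fin n) ℝ))

lemma prodFrom_succ' {n : ℕ} (U : ℕ → Matrix (Fin n) (Fin n) ℝ) (j k : ℕ) :
    prodFrom U j (k+1) = prodFrom U (j+1) k * U (j+1) := by
  induction k with
  | zero => simp [prodFrom]
  | succ k ih =>
    show U (j + k + 1 + 1) * prodFrom U j (k+1) = U (j + 1 + k + 1) * prodFrom U (j+1) k * U (j+1)
    rw [ih, show j + k + 1 + 1 = j + 1 + k + 1 by omega, mul_assoc]

lemma sub_smul_comm' {n : ℕ} (A : Matrix (Fin n) (Fin n) ℝ) (x y : ℝ) :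
    (A - x • 1) * (A - y • 1) = (A - y • 1) * (A - x • 1) := by
  simp only [sub_mul, mul_sub, Matrix.mul_smul, Matrix.smul_mul, smul_smul, mul_one, one_mul]
  ring_nf
  abel

lemma polyProd_comm {n : ℕ} (A : Matrix (Fin n) (Fin n) ℝ) (c : ℕ → ℝ) (N : ℕ) (x : ℝ) :
    polyProd A c N * (A - x • 1) = (A - x • 1) * polyProd A c N := by
  induction N with
  | zero => simp [polyProd]
  | succ N ih =>
    show polyProd A c N * (A - c N • 1) * (A - x • 1)
        = (A - x • 1) * (polyProd A c N * (A - c N • 1))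
    rw [mul_assoc, sub_smul_comm', ← mul_assoc, ih, mul_assoc]

/-- Under the relaxed balanced conditions
`U_{i+1}ᵀ U_{i+1} − U_i U_iᵀ = λ_i I` (for `i = 1, …, L−1`), the suffix Gram matrices
factor as polynomials in `U_L U_Lᵀ`, namely
`(U_L ⋯ U_{j+1})(U_L ⋯ U_{j+1})ᵀ = ∏_{k=0}^{L−j−1}(U_L U_Lᵀ − a_k I)` for `0 ≤ j ≤ L`,
and the prefix Gram matrices factor as polynomials in `U_1ᵀ U_1`, namely
`(U_1ᵀ ⋯ U_{j−1}ᵀ)(U_{j−1} ⋯ U_1) = ∏_{k=0}^{j−2}(U_1ᵀ U_1 − b_k I)` for `1 ≤ j ≤ L`,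
where `a_0 = 0`, `a_k = Σ_{i=1}^k λ_{L−i}` and `b_0 = 0`, `b_k = −Σ_{i=1}^k λ_i`. -/
theorem deep_linear_relaxed_balanced_polynomial_factorization
    (n L : ℕ) (hn : 0 < n) (hL : 2 ≤ L)
    (U : ℕ → Matrix (Fin n) (Fin n) ℝ) (lam : ℕ → ℝ)
    (hbal : ∀ i, 1 ≤ i → i ≤ L - 1 →
      (U (i + 1))ᵀ * U (i + 1) - U i * (U i)ᵀ =
        lam i • (1 : Matrix (Fin n) (Fin n) ℝ)) :
    (∀ j, j ≤ L →
      prodFrom U j (L - j) * (prodFrom U j (L - j))ᵀ =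
        polyProd (U L * (U L)ᵀ) (fun k => ∑ i ∈ Finset.Icc 1 k, lam (L - i)) (L - j)) ∧
    (∀ j, 1 ≤ j → j ≤ L →
      (prodFrom U 0 (j - 1))ᵀ * prodFrom U 0 (j - 1) =
        polyProd ((U 1)ᵀ * U 1) (fun k => -∑ i ∈ Finset.Icc 1 k, lam i) (j - 1)) ∧
    prodFrom U 0 L * (prodFrom U 0 L)ᵀ =
      polyProd (U L * (U L)ᵀ) (fun k => ∑ i ∈ Finset.Icc 1 k, lam (L - i)) L := by
  set a : ℕ → ℝ := fun k => ∑ i ∈ Finset.Icc 1 k, lam (L - i) with ha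
  set b : ℕ → ℝ := fun k => -∑ i ∈ Finset.Icc 1 k, lam i with hb
  have comm1 : ∀ m, m + 1 ≤ L →
      prodFrom U (L - m) m * (U (L - m) * (U (L - m))ᵀ) =
        (U L * (U L)ᵀ - a m • 1) * prodFrom U (L - m) m := by
    intro m
    induction m with
    | zero =>
      intro _
      simp [prodFrom, ha]
    | succ m ih =>
      intro hm
      have ih' := ih (by omega)
      have hj : L - (m+1) + 1 = L - m := by omega
      have hblm := hbal (L - (m+1)) (by omega) (by omega)
      rw [hj] at hblm
      have hUU : U (L-(m+1)) * (U (L-(m+1)))ᵀ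
          = (U (L - m))ᵀ * U (L - m) - lam (L-(m+1)) • 1 := by
        rw [eq_sub_iff_add_eq, ← eq_sub_iff_add_eq']
        exact hblm.symm
      have hsplit : prodFrom U (L-(m+1)) (m+1) = prodFrom U (L - m) m * U (L - m) := by
        rw [prodFrom_succ', hj]
      have hsum : a (m+1) = a m + lam (L-(m+1)) := by
        simp only [ha]
        rw [Finset.sum_Icc_succ_top (by omega : 1 ≤ m + 1)]
      rw [hsplit, hUU, hsum]
      set P := prodFrom U (L - m) m
      set V := U (L - m)
      set W := U L
      calc P * V * (Vᵀ * V - lam (L-(m+1)) • 1)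
          = P * (V * Vᵀ) * V - lam (L-(m+1)) • (P * V) := by
            rw [mul_sub, Matrix.mul_smul, mul_one, mul_assoc, mul_assoc, mul_assoc]
        _ = (W * Wᵀ - a m • 1) * P * V - lam (L-(m+1)) • (P * V) := by rw [ih']
        _ = (W * Wᵀ - (a m + lam (L-(m+1))) • 1) * (P * V) := by
            simp only [add_smul, sub_add_eq_sub_sub, sub_mul, smul_mul_assoc, one_mul,
              mul_assoc]
  have main1 : ∀ m, m ≤ L →
      prodFrom U (L - m) m * (prodFrom U (L - m) m)ᵀ =
        polyProd (U L * (U L)ᵀ) a m := by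
    intro m
    induction m with
    | zero => intro _; simp [prodFrom, polyProd]
    | succ m ih =>
      intro hm
      have ih' := ih (by omega)
      have hj : L - (m+1) + 1 = L - m := by omega
      have hsplit : prodFrom U (L-(m+1)) (m+1) = prodFrom U (L - m) m * U (L - m) := by
        rw [prodFrom_succ', hj]
      have hc := comm1 m (by omega)
      rw [hsplit]
      set P := prodFrom U (L - m) m
      set V := U (L - m)
      set W := U L
      show P * V * (P * V)ᵀ = polyProd (W * Wᵀ) a m * (W * Wᵀ - a m • 1)
      calc P * V * (P * V)ᵀ
          = P * (V * Vᵀ) * Pᵀ := by rw [Matrix.transpose_mul, mul_assoc, mul_assoc, mul_assoc]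
        _ = (W * Wᵀ - a m • 1) * (P * Pᵀ) := by rw [hc, mul_assoc]
        _ = (W * Wᵀ - a m • 1) * polyProd (W * Wᵀ) a m := by rw [ih']
        _ = polyProd (W * Wᵀ) a m * (W * Wᵀ - a m • 1) := (polyProd_comm _ _ _ _).symm
  have prod0 : ∀ m, prodFrom U 0 (m+1) = U (m+1) * prodFrom U 0 m := by
    intro m
    show U (0 + m + 1) * prodFrom U 0 m = _
    rw [Nat.zero_add]
  have comm2 : ∀ m, m ≤ L - 1 →
      ((U (m+1))ᵀ * U (m+1)) * prodFrom U 0 m =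
        prodFrom U 0 m * ((U 1)ᵀ * U 1 - b m • 1) := by
    intro m
    induction m with
    | zero =>
      intro _
      simp [prodFrom, hb]
    | succ m ih =>
      intro hm
      have ih' := ih (by omega)
      have hblm := hbal (m+1) (by omega) (by omega)
      have hUU : (U (m+2))ᵀ * U (m+2) = lam (m+1) • 1 + U (m+1) * (U (m+1))ᵀ := by
        exact sub_eq_iff_eq_add.mp hblm
      have hsum : b (m+1) = b m - lam (m+1) := by
        simp only [hb]
        rw [Finset.sum_Icc_succ_top (by omega : 1 ≤ m + 1)]
        ring
      rw [prod0 m, show m + 1 + 1 = m + 2 by rfl, hUU, hsum]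
      set B := prodFrom U 0 m
      set V := U (m+1)
      set A := (U 1)ᵀ * U 1
      calc (lam (m+1) • 1 + V * Vᵀ) * (V * B)
          = lam (m+1) • (V * B) + V * (Vᵀ * V * B) := by
            simp only [add_mul, Matrix.smul_mul, one_mul, mul_assoc]
        _ = lam (m+1) • (V * B) + V * (B * (A - b m • 1)) := by rw [ih']
        _ = V * B * (A - (b m - lam (m+1)) • 1) := by
            simp only [sub_smul, mul_sub, mul_add, Matrix.mul_smul, mul_one, mul_assoc,
              sub_sub_eq_add_sub]
            abel
  have main2 : ∀ m, m ≤ L - 1 →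
      (prodFrom U 0 m)ᵀ * prodFrom U 0 m = polyProd ((U 1)ᵀ * U 1) b m := by
    intro m
    induction m with
    | zero => intro _; simp [prodFrom, polyProd]
    | succ m ih =>
      intro hm
      have ih' := ih (by omega)
      have hc := comm2 m (by omega)
      rw [prod0 m]
      set B := prodFrom U 0 m
      set V := U (m+1)
      set A := (U 1)ᵀ * U 1
      show (V * B)ᵀ * (V * B) = polyProd A b m * (A - b m • 1)
      calc (V * B)ᵀ * (V * B)
          = Bᵀ * ((Vᵀ * V) * B) := by rw [Matrix.transpose_mul, mul_assoc, mul_assoc]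
        _ = Bᵀ * (B * (A - b m • 1)) := by rw [hc]
        _ = polyProd A b m * (A - b m • 1) := by rw [← mul_assoc, ih']
  refine ⟨?_, ?_, ?_⟩
  · intro j hj
    have := main1 (L - j) (by omega)
    rwa [show L - (L - j) = j by omega] at this
  · intro j h1 h2
    exact main2 (j - 1) (by omega)
  · have := main1 L le_rfl
    rwa [Nat.sub_self] at this
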